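/- (Alternative formula for the s-value.) Let T : Θ → ℝ be nonnegative, let F : ℝ → ℝ be a continuous, strictly increasing function with F(0) = 0 and F(t) → 1 as t → ∞ (a continuous strictly increasing CDF on [0,∞)), and for α ∈ (0,1) let F_α denote the unique point with F(F_α) = 1 - α, and Λ_α = {θ : T θ ≤ F_α}. Then for any nonempty Θ₀ ⊆ Θ on which T attains its infimum at some θ̂₀ ∈ Θ₀, the s-value satisfies s(Θ₀) = sSup {α ∈ (0,1) : Λ_α ∩ Θ₀ ≠ ∅} = ⨆_{θ ∈ Θ₀} (1 - F(T θ)) = 1 - F(T θ̂₀). -/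

import Mathlib

/-!
Since `θ̂₀` minimises `T` on `Θ₀` and `F` is increasing, `Λ_α` meets `Θ₀` exactly when
`T θ̂₀ ≤ F_α`, i.e. when `α ≤ 1 - F (T θ̂₀)`. The admissible levels thus form
`(0, 1) ∩ (-∞, 1 - F (T θ̂₀)]`, whose supremum is `1 - F (T θ̂₀)` because `0 ≤ F < 1` on `[0, ∞)`.
The same monotonicity makes `θ ↦ 1 - F (T θ)` maximal on `Θ₀` at `θ̂₀`.
-/

open Set Filter

theorem StrictMonoOn.lt_of_tendsto_atTop {α β : Type*} [LinearOrder α] [NoMaxOrder α]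
    [PartialOrder β] [TopologicalSpace β] [OrderClosedTopology β] {f : α → β} {a t : α} {l : β}
    (hf : StrictMonoOn f (Ici a)) (hlim : Tendsto f atTop (nhds l)) (ht : a ≤ t) : f t < l := by
  have : Nonempty α := ⟨t⟩
  obtain ⟨u, htu⟩ := exists_gt t
  have hu : a ≤ u := ht.trans htu.le
  calc f t < f u := hf ht hu htu
    _ ≤ l := ge_of_tendsto hlim <| (eventually_ge_atTop u).mono fun v hv =>
      hf.monotoneOn hu (hu.trans hv) hv

theorem isMinOn_of_eq_ciInf {α β : Type*} [ConditionallyCompleteLattice α] {f : β → α}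
    {s : Set β} {x₀ : β} (hbdd : BddBelow (f '' s)) (h : f x₀ = ⨅ x : s, f x) :
    IsMinOn f s x₀ :=
  isMinOn_iff.2 fun x hx => h ▸ ciInf_le (by rwa [image_eq_range] at hbdd) (⟨x, hx⟩ : s)

theorem csSup_Ioo_inter_Iic {α : Type*} [ConditionallyCompleteLinearOrder α] [DenselyOrdered α]
    {a b m : α} (ham : a < m) (hmb : m ≤ b) : sSup (Ioo a b ∩ Iic m) = m := by
  obtain ⟨c, hac, hcm⟩ := exists_between ham
  have hsub : Ioo a m ⊆ Ioo a b ∩ Iic m := fun _ hx => ⟨⟨hx.1, hx.2.trans_le hmb⟩, hx.2.le⟩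
  exact ((isLUB_Ioo ham).of_subset_of_superset isLUB_Iic hsub inter_subset_right).csSup_eq
    ⟨c, hsub ⟨hac, hcm⟩⟩

theorem IsMinOn.inter_nonempty_iff {α β : Type*} [Preorder β] {f : α → β} {s : Set α} {a : α}
    (hmin : IsMinOn f s a) (ha : a ∈ s) {c : β} : ({x | f x ≤ c} ∩ s).Nonempty ↔ f a ≤ c :=
  ⟨fun ⟨_, hxc, hx⟩ => (isMinOn_iff.1 hmin _ hx).trans hxc, fun hac => ⟨a, hac, ha⟩⟩

theorem s_value_alternative_formula_general (Θ : Type*) (T : Θ → ℝ)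
    (hT : ∀ θ, 0 ≤ T θ)
    (F : ℝ → ℝ) (hFm : StrictMonoOn F (Set.Ici 0))
    (hF0 : F 0 = 0) (hFlim : Tendsto F atTop (nhds 1))
    (Fq : ℝ → ℝ) (hFq : ∀ α ∈ Set.Ioo (0:ℝ) 1, 0 ≤ Fq α ∧ F (Fq α) = 1 - α)
    (Λ : ℝ → Set Θ) (hΛ : ∀ α, Λ α = {θ | T θ ≤ Fq α})
    (Θ0 : Set Θ)
    (θhat0 : Θ) (hθhat0 : θhat0 ∈ Θ0)
    (hinf : T θhat0 = ⨅ θ : Θ0, T θ)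
    (s : Set Θ → ℝ)
    (hs : ∀ A : Set Θ, s A = max 0 (sSup {α : ℝ | α ∈ Set.Ioo (0:ℝ) 1 ∧ (Λ α ∩ A).Nonempty})) :
    s Θ0 = sSup {α : ℝ | α ∈ Set.Ioo (0:ℝ) 1 ∧ (Λ α ∩ Θ0).Nonempty} ∧
    sSup {α : ℝ | α ∈ Set.Ioo (0:ℝ) 1 ∧ (Λ α ∩ Θ0).Nonempty} = ⨆ θ : Θ0, (1 - F (T θ)) ∧
    (⨆ θ : Θ0, (1 - F (T θ))) = 1 - F (T θhat0) := by
  obtain rfl : Λ = fun α => {θ | T θ ≤ Fq α} := funext hΛ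
  have hmin : IsMinOn T Θ0 θhat0 :=
    isMinOn_of_eq_ciInf ⟨0, by rintro _ ⟨θ, -, rfl⟩; exact hT θ⟩ hinf
  have hF_lt_one : F (T θhat0) < 1 := hFm.lt_of_tendsto_atTop hFlim (hT θhat0)
  have hF_nonneg : 0 ≤ F (T θhat0) := hF0 ▸ hFm.monotoneOn self_mem_Ici (hT θhat0) (hT θhat0)
  have hlevel : {α : ℝ | α ∈ Ioo (0:ℝ) 1 ∧ ({θ | T θ ≤ Fq α} ∩ Θ0).Nonempty} =
      Ioo 0 1 ∩ Iic (1 - F (T θhat0)) := by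
    ext α
    refine and_congr_right fun hα => ?_
    rw [hmin.inter_nonempty_iff hθhat0, ← hFm.le_iff_le (hT θhat0) (hFq α hα).1,
      (hFq α hα).2, le_sub_comm, mem_Iic]
  have hsSup := hlevel ▸ csSup_Ioo_inter_Iic (by linarith : (0:ℝ) < 1 - F (T θhat0))
    (by linarith : 1 - F (T θhat0) ≤ 1)
  have hiSup : (⨆ θ : Θ0, (1 - F (T θ))) = 1 - F (T θhat0) :=
    IsMaxOn.iSup_eq (f := fun θ => 1 - F (T θ)) hθhat0 <| isMaxOn_iff.2 fun θ hθ =>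
      sub_le_sub_left (hFm.monotoneOn (hT θhat0) (hT θ) (isMinOn_iff.1 hmin θ hθ)) 1
  exact ⟨by rw [hs, hsSup, max_eq_right (by linarith)], hsSup.trans hiSup.symm, hiSup⟩

theorem s_value_alternative_formula (Θ : Type*) (T : Θ → ℝ)
    (hT : ∀ θ, 0 ≤ T θ)
    (F : ℝ → ℝ) (hFc : Continuous F) (hFm : StrictMonoOn F (Set.Ici 0))
    (hF0 : F 0 = 0) (hFlim : Tendsto F atTop (nhds 1))
    (Fq : ℝ → ℝ) (hFq : ∀ α ∈ Set.Ioo (0:ℝ) 1, 0 ≤ Fq α ∧ F (Fq α) = 1 - α)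
    (Λ : ℝ → Set Θ) (hΛ : ∀ α, Λ α = {θ | T θ ≤ Fq α})
    (Θ0 : Set Θ) (hne : Θ0.Nonempty)
    (θhat0 : Θ) (hθhat0 : θhat0 ∈ Θ0)
    (hinf : T θhat0 = ⨅ θ : Θ0, T θ)
    (s : Set Θ → ℝ)
    (hs : ∀ A : Set Θ, s A = max 0 (sSup {α : ℝ | α ∈ Set.Ioo (0:ℝ) 1 ∧ (Λ α ∩ A).Nonempty})) :
    s Θ0 = sSup {α : ℝ | α ∈ Set.Ioo (0:ℝ) 1 ∧ (Λ α ∩ Θ0).Nonempty} ∧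
    sSup {α : ℝ | α ∈ Set.Ioo (0:ℝ) 1 ∧ (Λ α ∩ Θ0).Nonempty} = ⨆ θ : Θ0, (1 - F (T θ)) ∧
    (⨆ θ : Θ0, (1 - F (T θ))) = 1 - F (T θhat0) :=
  s_value_alternative_formula_general Θ T hT F hFm hF0 hFlim Fq hFq Λ hΛ Θ0 θhat0 hθhat0 hinf s hs
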